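/- arXiv:0810.3098 — 3 statements merged into one kernel-verified Lean document; each statement's English description precedes it below -/
import Mathlib

section
/- Classical discrete Hardy inequality: For every r > 0 and t > 1 there exists a constant K = K(r,t) > 0 such that for every summable sequence of positive reals (x_m)_{m≥0}, one has ∑_{m=0}^∞ t^m (∑_{k=m}^∞ x_k)^r ≤ K ∑_{m=0}^∞ t^m x_m^r. -/
open ENNReal

namespace HardyAux

lemma tsum_shift (g : ℕ → ℝ≥0∞) (m : ℕ) :
    ∑' k, g (m + k) = ∑' n, if m ≤ n then g n else 0 := by
  have hinj : Function.Injective (fun k : ℕ => m + k) := fun a b h => by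
    simpa using h
  have hsupp : Function.support (fun n => if m ≤ n then g n else 0)
      ⊆ Set.range (fun k : ℕ => m + k) := by
    intro n hn
    by_cases h : m ≤ n
    · exact ⟨n - m, by simp; omega⟩
    · simp [h] at hn
  rw [← hinj.tsum_eq hsupp]
  exact tsum_congr fun k => by simp [Nat.le_add_right]

lemma tsum_swap (c g : ℕ → ℝ≥0∞) :
    ∑' m, c m * ∑' n, (if m ≤ n then g n else 0)
      = ∑' n, g n * ∑ m ∈ Finset.range (n + 1), c m := by
  calc ∑' m, c m * ∑' n, (if m ≤ n then g n else 0)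
      = ∑' m, ∑' n, (if m ≤ n then c m * g n else 0) := by
        refine tsum_congr fun m => ?_
        rw [← ENNReal.tsum_mul_left]
        exact tsum_congr fun n => by split <;> simp
    _ = ∑' n, ∑' m, (if m ≤ n then c m * g n else 0) := ENNReal.tsum_comm
    _ = ∑' n, g n * ∑ m ∈ Finset.range (n + 1), c m := by
        refine tsum_congr fun n => ?_
        rw [tsum_eq_sum (s := Finset.range (n + 1))
          (fun m hm => by
            simp only [Finset.mem_range, not_lt] at hm
            rw [if_neg (by omega)])]
        rw [Finset.mul_sum]
        refine Finset.sum_congr rfl fun m hm => ?_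
        simp only [Finset.mem_range] at hm
        rw [if_pos (by omega), mul_comm]

lemma geom_bound {U : ℝ≥0∞} (hU : 1 < U) (hU' : U ≠ ⊤) (n : ℕ) :
    ∑ m ∈ Finset.range (n + 1), U ^ m ≤ (1 - U⁻¹)⁻¹ * U ^ n := by
  have hU0 : U ≠ 0 := (zero_lt_one.trans hU).ne'
  have key : ∀ m ∈ Finset.range (n + 1), U ^ m = U⁻¹ ^ (n - m) * U ^ n := by
    intro m hm
    simp only [Finset.mem_range] at hm
    have h1 : U ^ n = U ^ (n - m) * U ^ m := by rw [← pow_add]; congr 1; omega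
    rw [h1, ← mul_assoc,
      show U⁻¹ ^ (n - m) * U ^ (n - m) = 1 from by
        rw [← ENNReal.inv_pow, ENNReal.inv_mul_cancel (pow_ne_zero _ hU0)
          (ENNReal.pow_ne_top hU')],
      one_mul]
  rw [Finset.sum_congr rfl key, ← Finset.sum_mul]
  gcongr
  calc ∑ m ∈ Finset.range (n + 1), U⁻¹ ^ (n - m)
      = ∑ m ∈ Finset.range (n + 1), U⁻¹ ^ m := by
        rw [← Finset.sum_range_reflect (fun m => U⁻¹ ^ m) (n + 1)]
        simp
    _ ≤ ∑' m : ℕ, U⁻¹ ^ m := ENNReal.sum_le_tsum _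
    _ = (1 - U⁻¹)⁻¹ := ENNReal.tsum_geometric _

lemma finset_rpow_le {r : ℝ} (hr : 0 < r) (hr1 : r ≤ 1) {ι : Type*} (s : Finset ι)
    (f : ι → ℝ≥0∞) : (∑ i ∈ s, f i) ^ r ≤ ∑ i ∈ s, f i ^ r := by
  classical
  induction s using Finset.cons_induction with
  | empty => simp [ENNReal.zero_rpow_of_pos hr]
  | cons a s ha ih =>
    rw [Finset.sum_cons, Finset.sum_cons]
    exact le_trans (ENNReal.rpow_add_le_add_rpow _ _ hr.le hr1) (by gcongr)

lemma tsum_rpow_le {r : ℝ} (hr : 0 < r) (hr1 : r ≤ 1) (f : ℕ → ℝ≥0∞) :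
    (∑' i, f i) ^ r ≤ ∑' i, f i ^ r := by
  have h1 : ∑' i, f i ≤ (∑' i, f i ^ r) ^ r⁻¹ := by
    rw [ENNReal.tsum_eq_iSup_sum]
    refine iSup_le fun s => ?_
    calc ∑ i ∈ s, f i = ((∑ i ∈ s, f i) ^ r) ^ r⁻¹ := by
          rw [ENNReal.rpow_rpow_inv hr.ne']
      _ ≤ (∑ i ∈ s, f i ^ r) ^ r⁻¹ :=
          ENNReal.rpow_le_rpow (finset_rpow_le hr hr1 s f) (by positivity)
      _ ≤ (∑' i, f i ^ r) ^ r⁻¹ :=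
          ENNReal.rpow_le_rpow (ENNReal.sum_le_tsum s) (by positivity)
  calc (∑' i, f i) ^ r ≤ (((∑' i, f i ^ r) ^ r⁻¹)) ^ r := ENNReal.rpow_le_rpow h1 hr.le
    _ = ∑' i, f i ^ r := ENNReal.rpow_inv_rpow hr.ne' _

lemma tsum_inner_le {p : ℝ} (hp : 1 ≤ p) (w f : ℕ → ℝ≥0∞) :
    ∑' i, w i * f i ≤ (∑' i, w i) ^ (1 - p⁻¹) * (∑' i, w i * f i ^ p) ^ p⁻¹ := by
  have hp0 : (0:ℝ) < p := lt_of_lt_of_le zero_lt_one hp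
  have h1 : (0:ℝ) ≤ 1 - p⁻¹ := by
    have : p⁻¹ ≤ 1 := by rw [inv_le_one_iff₀]; right; exact hp
    linarith
  calc ∑' i, w i * f i = ⨆ s : Finset ℕ, ∑ i ∈ s, w i * f i := ENNReal.tsum_eq_iSup_sum
    _ ≤ (∑' i, w i) ^ (1 - p⁻¹) * (∑' i, w i * f i ^ p) ^ p⁻¹ := by
        refine iSup_le fun s => ?_
        refine le_trans (ENNReal.inner_le_weight_mul_Lp_of_nonneg s hp w f) ?_
        exact mul_le_mul' (ENNReal.rpow_le_rpow (ENNReal.sum_le_tsum s) h1)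
          (ENNReal.rpow_le_rpow (ENNReal.sum_le_tsum s) (by positivity))

lemma pow_rpow_comm (x : ℝ≥0∞) (m : ℕ) (y : ℝ) : (x ^ m) ^ y = (x ^ y) ^ m := by
  rw [← ENNReal.rpow_natCast x m, ← ENNReal.rpow_mul, mul_comm, ENNReal.rpow_mul,
    ENNReal.rpow_natCast]

theorem hardy_ennreal (r : ℝ) (hr : 0 < r) (T : ℝ≥0∞) (hT1 : 1 < T) (hTt : T ≠ ⊤) :
    ∃ K : ℝ≥0∞, K ≠ ⊤ ∧ ∀ X : ℕ → ℝ≥0∞,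
      ∑' m, T ^ m * (∑' k, X (m + k)) ^ r ≤ K * ∑' m, T ^ m * X m ^ r := by
  rcases le_or_gt r 1 with hr1 | hr1
  · -- r ≤ 1 : subadditivity
    have hTinv : T⁻¹ < 1 := ENNReal.inv_lt_one.mpr hT1
    have hne : (1 : ℝ≥0∞) - T⁻¹ ≠ 0 :=
      fun h => absurd (tsub_eq_zero_iff_le.mp h) (not_le.mpr hTinv)
    refine ⟨(1 - T⁻¹)⁻¹, ENNReal.inv_ne_top.mpr hne, fun X => ?_⟩
    calc ∑' m, T ^ m * (∑' k, X (m + k)) ^ r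
        ≤ ∑' m, T ^ m * ∑' k, X (m + k) ^ r := by
          gcongr with m
          exact tsum_rpow_le hr hr1 _
      _ = ∑' m, T ^ m * ∑' n, (if m ≤ n then X n ^ r else 0) := by
          exact tsum_congr fun m => by rw [tsum_shift (fun n => X n ^ r) m]
      _ = ∑' n, X n ^ r * ∑ m ∈ Finset.range (n + 1), T ^ m :=
          tsum_swap _ _
      _ ≤ ∑' n, X n ^ r * ((1 - T⁻¹)⁻¹ * T ^ n) := by
          gcongr with n
          exact geom_bound hT1 hTt n
      _ = (1 - T⁻¹)⁻¹ * ∑' n, T ^ n * X n ^ r := by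
          rw [← ENNReal.tsum_mul_left]
          exact tsum_congr fun n => by ring
  · -- r > 1 : weighted Hölder
    set a : ℝ≥0∞ := T ^ (1 / (2 * r)) with ha_def
    have ha1 : 1 < a := ENNReal.one_lt_rpow hT1 (by positivity)
    have ha0 : a ≠ 0 := (zero_lt_one.trans ha1).ne'
    have hat : a ≠ ⊤ := ENNReal.rpow_ne_top_of_nonneg (by positivity) hTt
    set b : ℝ≥0∞ := a⁻¹ with hb_def
    have hb1 : b < 1 := ENNReal.inv_lt_one.mpr ha1
    have hb0 : b ≠ 0 := ENNReal.inv_ne_zero.mpr hat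
    have hbt : b ≠ ⊤ := ENNReal.inv_ne_top.mpr ha0
    have hab : a * b = 1 := ENNReal.mul_inv_cancel ha0 hat
    -- a ^ (r-1) < T
    have har : a ^ (r - 1) < T := by
      calc a ^ (r - 1) ≤ a ^ r := ENNReal.rpow_le_rpow_of_exponent_le ha1.le (by linarith)
        _ = T ^ (1 / 2 : ℝ) := by
            rw [ha_def, ← ENNReal.rpow_mul]
            congr 1
            field_simp
        _ < T ^ (1 : ℝ) := ENNReal.rpow_lt_rpow_of_exponent_lt hT1 hTt (by norm_num)
        _ = T := ENNReal.rpow_one T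
    set U : ℝ≥0∞ := T * b ^ (r - 1) with hU_def
    have hcb : b ^ (r - 1) = (a ^ (r - 1))⁻¹ := ENNReal.inv_rpow a (r - 1)
    have hc0 : a ^ (r - 1) ≠ 0 := by
      simp only [ne_eq, ENNReal.rpow_eq_zero_iff, not_or]
      exact ⟨fun h => ha0 h.1, fun h => hat h.1⟩
    have hct : a ^ (r - 1) ≠ ⊤ := ENNReal.rpow_ne_top_of_nonneg (by linarith) hat
    have hUc : U * a ^ (r - 1) = T := by
      rw [hU_def, hcb, mul_assoc, ENNReal.inv_mul_cancel hc0 hct, mul_one]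
    have hU1 : 1 < U := by
      rcases le_or_gt U 1 with h | h
      · exfalso
        have : T ≤ a ^ (r - 1) := by
          calc T = U * a ^ (r - 1) := hUc.symm
            _ ≤ 1 * a ^ (r - 1) := mul_le_mul_left h _
            _ = a ^ (r - 1) := one_mul _
        exact absurd this (not_le.mpr har)
      · exact h
    have hUt : U ≠ ⊤ := by
      have h1c : (1:ℝ≥0∞) ≤ a ^ (r - 1) :=
        ENNReal.one_le_rpow ha1.le (by linarith)
      have : U ≤ T := by
        rw [hU_def, hcb]
        calc T * (a ^ (r - 1))⁻¹ ≤ T * 1 :=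
              mul_le_mul_right (ENNReal.inv_le_one.mpr h1c) _
          _ = T := mul_one T
      exact fun h => hTt (top_le_iff.mp (h ▸ this))
    have hbsub : (1 : ℝ≥0∞) - b ≠ 0 :=
      fun h => absurd (tsub_eq_zero_iff_le.mp h) (not_le.mpr hb1)
    have hUinv : (1 : ℝ≥0∞) - U⁻¹ ≠ 0 :=
      fun h => absurd (tsub_eq_zero_iff_le.mp h)
        (not_le.mpr (ENNReal.inv_lt_one.mpr hU1))
    set D : ℝ≥0∞ := ((1 - b)⁻¹) ^ (r - 1) with hD_def
    have hDt : D ≠ ⊤ :=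
      ENNReal.rpow_ne_top_of_nonneg (by linarith) (ENNReal.inv_ne_top.mpr hbsub)
    set C₁ : ℝ≥0∞ := (1 - U⁻¹)⁻¹ with hC₁_def
    have hC₁t : C₁ ≠ ⊤ := ENNReal.inv_ne_top.mpr hUinv
    refine ⟨D * C₁, ENNReal.mul_ne_top hDt hC₁t, fun X => ?_⟩
    -- notation
    set G : ℕ → ℝ≥0∞ := fun n => b ^ n * (X n * a ^ n) ^ r with hG_def
    -- pointwise Hölder estimate
    have step1 : ∀ m, T ^ m * (∑' k, X (m + k)) ^ r
        ≤ D * (U ^ m * ∑' n, (if m ≤ n then G n else 0)) := by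
      intro m
      set w : ℕ → ℝ≥0∞ := fun n => if m ≤ n then b ^ n else 0 with hw_def
      set f : ℕ → ℝ≥0∞ := fun n => X n * a ^ n with hf_def
      have hwf : ∀ n, w n * f n = (if m ≤ n then X n else 0) := by
        intro n
        by_cases h : m ≤ n
        · simp only [hw_def, hf_def, if_pos h]
          calc b ^ n * (X n * a ^ n) = X n * ((a * b) ^ n) := by rw [mul_pow]; ring
            _ = X n := by rw [hab, one_pow, mul_one]
        · simp [hw_def, h]
      have hS : ∑' k, X (m + k) = ∑' n, w n * f n := by
        rw [tsum_shift X m]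
        exact tsum_congr fun n => (hwf n).symm
      have hsumw : ∑' n, w n = b ^ m * (1 - b)⁻¹ := by
        calc ∑' n, w n = ∑' k, b ^ (m + k) := (tsum_shift (fun n => b ^ n) m).symm
          _ = ∑' k, b ^ m * b ^ k := tsum_congr fun k => by rw [pow_add]
          _ = b ^ m * (1 - b)⁻¹ := by rw [ENNReal.tsum_mul_left, ENNReal.tsum_geometric]
      have hwfr : ∀ n, w n * f n ^ r = (if m ≤ n then G n else 0) := by
        intro n
        by_cases h : m ≤ n <;> simp [hw_def, hf_def, hG_def, h]
      have holder : ∑' k, X (m + k)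
          ≤ (b ^ m * (1 - b)⁻¹) ^ (1 - r⁻¹) * (∑' n, (if m ≤ n then G n else 0)) ^ r⁻¹ := by
        rw [hS]
        refine le_trans (tsum_inner_le hr1.le w f) ?_
        rw [hsumw]
        refine mul_le_mul' le_rfl ?_
        refine ENNReal.rpow_le_rpow ?_ (by positivity)
        exact le_of_eq (tsum_congr hwfr)
      set B : ℝ≥0∞ := ∑' n, (if m ≤ n then G n else 0) with hB_def
      have hr0 : r ≠ 0 := hr.ne'
      have key : (∑' k, X (m + k)) ^ r ≤ (b ^ m * (1 - b)⁻¹) ^ (r - 1) * B := by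
        calc (∑' k, X (m + k)) ^ r
            ≤ ((b ^ m * (1 - b)⁻¹) ^ (1 - r⁻¹) * B ^ r⁻¹) ^ r :=
              ENNReal.rpow_le_rpow holder hr.le
          _ = (b ^ m * (1 - b)⁻¹) ^ ((1 - r⁻¹) * r) * B ^ (r⁻¹ * r) := by
              rw [ENNReal.mul_rpow_of_nonneg _ _ hr.le, ← ENNReal.rpow_mul,
                ← ENNReal.rpow_mul]
          _ = (b ^ m * (1 - b)⁻¹) ^ (r - 1) * B := by
              rw [inv_mul_cancel₀ hr0, ENNReal.rpow_one]
              congr 2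
              field_simp
      calc T ^ m * (∑' k, X (m + k)) ^ r
          ≤ T ^ m * ((b ^ m * (1 - b)⁻¹) ^ (r - 1) * B) := mul_le_mul_right key _
        _ = D * (U ^ m * B) := by
            rw [ENNReal.mul_rpow_of_nonneg _ _ (by linarith : (0:ℝ) ≤ r - 1),
              pow_rpow_comm, hU_def, mul_pow, hD_def]
            ring
    -- final key computation
    have hkey : ∀ n, G n * U ^ n = T ^ n * X n ^ r := by
      intro n
      have e1 : (X n * a ^ n) ^ r = X n ^ r * (a ^ r) ^ n := by
        rw [ENNReal.mul_rpow_of_nonneg _ _ hr.le, pow_rpow_comm]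
      have e2 : b ^ n * (b ^ (r - 1)) ^ n = (b ^ r) ^ n := by
        rw [← mul_pow]
        congr 1
        rw [show b * b ^ (r-1) = b ^ (1:ℝ) * b ^ (r-1) by rw [ENNReal.rpow_one],
          ← ENNReal.rpow_add _ _ hb0 hbt]
        congr 1
        ring
      have e3 : (a ^ r) ^ n * (b ^ r) ^ n = 1 := by
        rw [← mul_pow, ← ENNReal.mul_rpow_of_nonneg _ _ hr.le, hab,
          ENNReal.one_rpow, one_pow]
      calc G n * U ^ n = (b ^ n * (b ^ (r - 1)) ^ n) * ((X n * a ^ n) ^ r * T ^ n) := by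
            rw [hG_def, hU_def, mul_pow]; ring
        _ = (b ^ r) ^ n * ((X n ^ r * (a ^ r) ^ n) * T ^ n) := by rw [e1, e2]
        _ = T ^ n * X n ^ r * ((a ^ r) ^ n * (b ^ r) ^ n) := by ring
        _ = T ^ n * X n ^ r := by rw [e3, mul_one]
    calc ∑' m, T ^ m * (∑' k, X (m + k)) ^ r
        ≤ ∑' m, D * (U ^ m * ∑' n, (if m ≤ n then G n else 0)) :=
          ENNReal.tsum_le_tsum step1
      _ = D * ∑' m, U ^ m * ∑' n, (if m ≤ n then G n else 0) := ENNReal.tsum_mul_left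
      _ = D * ∑' n, G n * ∑ m ∈ Finset.range (n + 1), U ^ m := by
          rw [tsum_swap (fun m => U ^ m) G]
      _ ≤ D * ∑' n, G n * (C₁ * U ^ n) := by
          gcongr with n
          exact geom_bound hU1 hUt n
      _ = D * C₁ * ∑' n, T ^ n * X n ^ r := by
          have hfin : ∑' n, G n * (C₁ * U ^ n) = C₁ * ∑' n, T ^ n * X n ^ r := by
            rw [← ENNReal.tsum_mul_left]
            exact tsum_congr fun n => by
              rw [show G n * (C₁ * U ^ n) = C₁ * (G n * U ^ n) by ring, hkey n]
          rw [hfin, ← mul_assoc]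

end HardyAux

/-- Classical discrete Hardy inequality. -/
theorem classical_discrete_hardy (r t : ℝ) (hr : 0 < r) (ht : 1 < t) :
    ∃ K : ℝ, 0 < K ∧ ∀ x : ℕ → ℝ, (∀ m, 0 < x m) → Summable x →
      ∑' m : ℕ, ENNReal.ofReal (t ^ m * (∑' k : ℕ, x (m + k)) ^ r) ≤
        ENNReal.ofReal K * ∑' m : ℕ, ENNReal.ofReal (t ^ m * x m ^ r) := by
  have ht0 : (0:ℝ) ≤ t := by linarith
  have hT1 : (1 : ℝ≥0∞) < ENNReal.ofReal t := by
    rw [← ENNReal.ofReal_one]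
    exact (ENNReal.ofReal_lt_ofReal_iff (by linarith)).mpr ht
  obtain ⟨Ke, hKtop, hK⟩ := HardyAux.hardy_ennreal r hr (ENNReal.ofReal t) hT1
    ENNReal.ofReal_ne_top
  refine ⟨Ke.toReal + 1, by positivity, fun x hx hsum => ?_⟩
  set X : ℕ → ℝ≥0∞ := fun n => ENNReal.ofReal (x n) with hX_def
  have hLHS : ∀ m, ENNReal.ofReal (t ^ m * (∑' k, x (m + k)) ^ r)
      = (ENNReal.ofReal t) ^ m * (∑' k, X (m + k)) ^ r := by
    intro m
    have hs : Summable fun k => x (m + k) := by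
      have h1 := (summable_nat_add_iff (f := x) m).mpr hsum
      exact h1.congr (fun k => by rw [add_comm])
    have hS0 : 0 ≤ ∑' k, x (m + k) := tsum_nonneg fun k => (hx _).le
    rw [ENNReal.ofReal_mul (by positivity), ENNReal.ofReal_pow ht0,
      ← ENNReal.ofReal_rpow_of_nonneg hS0 hr.le,
      ENNReal.ofReal_tsum_of_nonneg (fun k => (hx _).le) hs]
  have hRHS : ∀ m, ENNReal.ofReal (t ^ m * x m ^ r)
      = (ENNReal.ofReal t) ^ m * X m ^ r := by
    intro m
    rw [ENNReal.ofReal_mul (by positivity), ENNReal.ofReal_pow ht0,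
      ← ENNReal.ofReal_rpow_of_nonneg (hx m).le hr.le]
  have hKle : Ke ≤ ENNReal.ofReal (Ke.toReal + 1) := by
    calc Ke = ENNReal.ofReal Ke.toReal := (ENNReal.ofReal_toReal hKtop).symm
      _ ≤ ENNReal.ofReal (Ke.toReal + 1) := ENNReal.ofReal_le_ofReal (by linarith)
  calc ∑' m : ℕ, ENNReal.ofReal (t ^ m * (∑' k : ℕ, x (m + k)) ^ r)
      = ∑' m, (ENNReal.ofReal t) ^ m * (∑' k, X (m + k)) ^ r := tsum_congr hLHS
    _ ≤ Ke * ∑' m, (ENNReal.ofReal t) ^ m * X m ^ r := hK X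
    _ ≤ ENNReal.ofReal (Ke.toReal + 1) * ∑' m, (ENNReal.ofReal t) ^ m * X m ^ r :=
        mul_le_mul_left hKle _
    _ = ENNReal.ofReal (Ke.toReal + 1) * ∑' m : ℕ, ENNReal.ofReal (t ^ m * x m ^ r) := by
        rw [tsum_congr hRHS]
end

section
/- Modified discrete Hardy inequality: For all r > 0, t > 1, κ > 1, λ > 0 there exists a constant K = K(r,t,κ,λ) > 0 such that for every sequence of positive reals (x_m)_{m≥0}, ∑_{m=0}^∞ t^m (∑_{k=⌈m/2⌉}^{m} x_k · exp(−λ κ^{m−k}))^r ≤ K ∑_{m=0}^∞ t^m x_m^r. -/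
open ENNReal

lemma two_term_rpow {r a b : ℝ} (hr : 0 < r) (ha : 0 ≤ a) (hb : 0 ≤ b) :
    (a + b) ^ r ≤ 2 ^ r * a ^ r + 2 ^ r * b ^ r := by
  have hmax : 0 ≤ max a b := le_max_of_le_left ha
  have h1 : (a + b) ^ r ≤ (2 * max a b) ^ r := by
    apply Real.rpow_le_rpow (by positivity) _ hr.le
    rcases le_total a b with h | h
    · rw [max_eq_right h]; linarith
    · rw [max_eq_left h]; linarith
  have h2 : (2 * max a b) ^ r = 2 ^ r * (max a b) ^ r :=
    Real.mul_rpow (by norm_num) hmax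
  have h3 : (max a b) ^ r ≤ a ^ r + b ^ r := by
    rcases le_total a b with h | h
    · rw [max_eq_right h]
      have := Real.rpow_nonneg ha r; linarith
    · rw [max_eq_left h]
      have := Real.rpow_nonneg hb r; linarith
  have h2r : (0:ℝ) ≤ 2 ^ r := Real.rpow_nonneg (by norm_num) r
  calc (a + b) ^ r ≤ 2 ^ r * (max a b) ^ r := by rw [← h2]; exact h1
    _ ≤ 2 ^ r * (a ^ r + b ^ r) := by nlinarith [Real.rpow_nonneg hmax r]
    _ = 2 ^ r * a ^ r + 2 ^ r * b ^ r := by ring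

lemma sum_rpow_le_weighted {r : ℝ} (hr : 0 < r) :
    ∀ (m l : ℕ) (a : ℕ → ℝ), (∀ k, 0 ≤ a k) →
    (∑ k ∈ Finset.Icc l m, a k) ^ r ≤
      ∑ k ∈ Finset.Icc l m, (2 ^ r) ^ (m - k + 1) * a k ^ r := by
  have h2r1 : (1:ℝ) ≤ 2 ^ r := Real.one_le_rpow (by norm_num) hr.le
  have h2r : (0:ℝ) ≤ 2 ^ r := by linarith
  intro m
  induction m with
  | zero =>
    intro l a ha
    rcases Nat.eq_zero_or_pos l with rfl | hl
    · simp only [Finset.Icc_self, Finset.sum_singleton]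
      have h0 : 0 ≤ a 0 ^ r := Real.rpow_nonneg (ha 0) r
      have : (2 ^ r) ^ (0 - 0 + 1) = (2:ℝ) ^ r := by norm_num
      rw [this]
      nlinarith
    · rw [Finset.Icc_eq_empty (by omega)]
      simp [Real.zero_rpow hr.ne']
  | succ m ih =>
    intro l a ha
    by_cases hl : l ≤ m + 1
    · have hins : Finset.Icc l (m + 1) = insert (m + 1) (Finset.Icc l m) := by
        ext k
        simp only [Finset.mem_Icc, Finset.mem_insert]
        omega
      have hnm : (m + 1) ∉ Finset.Icc l m := by simp
      rw [hins, Finset.sum_insert hnm, Finset.sum_insert hnm]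
      have hT : 0 ≤ ∑ k ∈ Finset.Icc l m, a k :=
        Finset.sum_nonneg fun k _ => ha k
      have step := two_term_rpow hr (ha (m + 1)) hT
      have hIH := ih l a ha
      have key : 2 ^ r * (∑ k ∈ Finset.Icc l m, a k) ^ r ≤
          ∑ k ∈ Finset.Icc l m, (2 ^ r) ^ (m + 1 - k + 1) * a k ^ r := by
        calc 2 ^ r * (∑ k ∈ Finset.Icc l m, a k) ^ r
            ≤ 2 ^ r * ∑ k ∈ Finset.Icc l m, (2 ^ r) ^ (m - k + 1) * a k ^ r :=
              mul_le_mul_of_nonneg_left hIH h2r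
          _ = ∑ k ∈ Finset.Icc l m, (2 ^ r) ^ (m + 1 - k + 1) * a k ^ r := by
              rw [Finset.mul_sum]
              refine Finset.sum_congr rfl fun k hk => ?_
              have hkm : k ≤ m := (Finset.mem_Icc.mp hk).2
              have : m + 1 - k + 1 = (m - k + 1) + 1 := by omega
              rw [this, pow_succ]
              ring
      have htop : (2 ^ r) ^ (m + 1 - (m + 1) + 1) * a (m + 1) ^ r
          = 2 ^ r * a (m + 1) ^ r := by
        have : m + 1 - (m + 1) + 1 = 1 := by omega
        rw [this, pow_one]
      rw [htop]
      linarith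
    · rw [Finset.Icc_eq_empty (by omega)]
      simp [Real.zero_rpow hr.ne']

/-- Modified discrete Hardy inequality. -/
theorem modified_discrete_hardy (r t κ lam : ℝ) (hr : 0 < r) (ht : 1 < t)
    (hκ : 1 < κ) (hlam : 0 < lam) :
    ∃ K : ℝ, 0 < K ∧ ∀ x : ℕ → ℝ, (∀ m, 0 < x m) →
      ∑' m : ℕ, ENNReal.ofReal (t ^ m *
          (∑ k ∈ Finset.Icc ((m + 1) / 2) m, x k * Real.exp (-lam * κ ^ (m - k))) ^ r) ≤
        ENNReal.ofReal K * ∑' m : ℕ, ENNReal.ofReal (t ^ m * x m ^ r) := by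
  have ht0 : (0:ℝ) < t := lt_trans one_pos ht
  have hκ0 : (0:ℝ) < κ := lt_trans one_pos hκ
  have h2r : (0:ℝ) < 2 ^ r := Real.rpow_pos_of_pos (by norm_num) r
  set c : ℕ → ℝ := fun j => 2 ^ r * ((2 ^ r * t) ^ j * Real.exp (-lam * κ ^ j) ^ r)
    with hc
  have hcpos : ∀ j, 0 < c j := by
    intro j
    have := Real.exp_pos (-lam * κ ^ j)
    have h1 : 0 < Real.exp (-lam * κ ^ j) ^ r := Real.rpow_pos_of_pos this r
    have h2 : 0 < (2 ^ r * t) ^ j := pow_pos (by positivity) j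
    positivity
  -- summability of c via ratio test
  have hsum : Summable c := by
    apply summable_of_ratio_test_tendsto_lt_one (l := 0) one_pos
      (Filter.Eventually.of_forall fun n => (hcpos n).ne')
    have hratio : ∀ n : ℕ, ‖c (n + 1)‖ / ‖c n‖ =
        (2 ^ r * t) * Real.exp (-(r * lam * (κ - 1)) * κ ^ n) := by
      intro n
      rw [Real.norm_of_nonneg (hcpos (n+1)).le, Real.norm_of_nonneg (hcpos n).le]
      have hexp : ∀ j : ℕ, Real.exp (-lam * κ ^ j) ^ r = Real.exp (-lam * κ ^ j * r) :=
        fun j => (Real.exp_mul (-lam * κ ^ j) r).symm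
      rw [hc]
      simp only [hexp]
      rw [div_eq_iff (by positivity)]
      have hprod : Real.exp (-(r * lam * (κ - 1)) * κ ^ n) * Real.exp (-lam * κ ^ n * r)
          = Real.exp (-lam * κ ^ (n + 1) * r) := by
        rw [← Real.exp_add]; congr 1; rw [pow_succ]; ring
      rw [pow_succ, ← hprod]
      ring
    have : Filter.Tendsto (fun n : ℕ => (2 ^ r * t) *
        Real.exp (-(r * lam * (κ - 1)) * κ ^ n)) Filter.atTop (nhds 0) := by
      have hκt : Filter.Tendsto (fun n : ℕ => (κ:ℝ) ^ n) Filter.atTop Filter.atTop :=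
        tendsto_pow_atTop_atTop_of_one_lt hκ
      have harg : Filter.Tendsto (fun n : ℕ => -(r * lam * (κ - 1)) * κ ^ n)
          Filter.atTop Filter.atBot := by
        have hC : 0 < r * lam * (κ - 1) := by
          have : 0 < κ - 1 := by linarith
          positivity
        have h1 := Filter.Tendsto.const_mul_atTop hC hκt
        have h2 := Filter.tendsto_neg_atTop_atBot.comp h1
        refine h2.congr fun n => ?_
        simp [neg_mul, Function.comp]
      have := Real.tendsto_exp_atBot.comp harg
      have h2 := this.const_mul (2 ^ r * t)
      simpa using h2
    apply Filter.Tendsto.congr (fun n => (hratio n).symm) this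
  refine ⟨∑' j, c j, ?_, ?_⟩
  · exact lt_of_lt_of_le (hcpos 0) (Summable.le_tsum hsum 0 fun j _ => (hcpos j).le)
  intro x hx
  -- notation
  set A : ℕ → ℝ≥0∞ := fun j => ENNReal.ofReal (c j) with hA
  set B : ℕ → ℝ≥0∞ := fun k => ENNReal.ofReal (t ^ k * x k ^ r) with hB
  set H : ℕ → ℕ → ℝ≥0∞ := fun m k => (if k ≤ m then A (m - k) else 0) * B k with hH
  -- pointwise bound
  have step1 : ∀ m : ℕ, ENNReal.ofReal (t ^ m *
      (∑ k ∈ Finset.Icc ((m + 1) / 2) m, x k * Real.exp (-lam * κ ^ (m - k))) ^ r) ≤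
      ∑ k ∈ Finset.Icc ((m + 1) / 2) m, H m k := by
    intro m
    have ha : ∀ k, 0 ≤ x k * Real.exp (-lam * κ ^ (m - k)) :=
      fun k => mul_nonneg (hx k).le (Real.exp_pos _).le
    have hlem := sum_rpow_le_weighted hr m ((m + 1) / 2)
      (fun k => x k * Real.exp (-lam * κ ^ (m - k))) ha
    have hreal : t ^ m *
        (∑ k ∈ Finset.Icc ((m + 1) / 2) m, x k * Real.exp (-lam * κ ^ (m - k))) ^ r ≤
        ∑ k ∈ Finset.Icc ((m + 1) / 2) m,
          t ^ m * ((2 ^ r) ^ (m - k + 1) * (x k * Real.exp (-lam * κ ^ (m - k))) ^ r) := by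
      rw [← Finset.mul_sum]
      exact mul_le_mul_of_nonneg_left hlem (by positivity)
    calc ENNReal.ofReal (t ^ m *
        (∑ k ∈ Finset.Icc ((m + 1) / 2) m, x k * Real.exp (-lam * κ ^ (m - k))) ^ r)
        ≤ ENNReal.ofReal (∑ k ∈ Finset.Icc ((m + 1) / 2) m,
          t ^ m * ((2 ^ r) ^ (m - k + 1) * (x k * Real.exp (-lam * κ ^ (m - k))) ^ r)) :=
          ENNReal.ofReal_le_ofReal hreal
      _ = ∑ k ∈ Finset.Icc ((m + 1) / 2) m, ENNReal.ofReal
          (t ^ m * ((2 ^ r) ^ (m - k + 1) * (x k * Real.exp (-lam * κ ^ (m - k))) ^ r)) := by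
          rw [ENNReal.ofReal_sum_of_nonneg]
          intro k _
          have h1 : (0:ℝ) < (x k * Real.exp (-lam * κ ^ (m - k))) ^ r :=
            Real.rpow_pos_of_pos (mul_pos (hx k) (Real.exp_pos _)) r
          positivity
      _ = ∑ k ∈ Finset.Icc ((m + 1) / 2) m, H m k := by
          refine Finset.sum_congr rfl fun k hk => ?_
          have hkm : k ≤ m := (Finset.mem_Icc.mp hk).2
          obtain ⟨j, rfl⟩ : ∃ j, m = k + j := ⟨m - k, by omega⟩
          have hid : t ^ (k + j) *
              ((2 ^ r) ^ (k + j - k + 1) * (x k * Real.exp (-lam * κ ^ (k + j - k))) ^ r)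
              = c j * (t ^ k * x k ^ r) := by
            have hjk : k + j - k = j := by omega
            rw [hjk]
            simp only [hc]
            rw [pow_add, pow_succ, mul_pow,
              Real.mul_rpow (hx k).le (Real.exp_pos _).le]
            ring
          rw [hid, hH]
          simp only [Nat.le_add_right, if_pos, Nat.add_sub_cancel_left]
          rw [ENNReal.ofReal_mul (hcpos j).le]
  calc ∑' m : ℕ, ENNReal.ofReal (t ^ m *
        (∑ k ∈ Finset.Icc ((m + 1) / 2) m, x k * Real.exp (-lam * κ ^ (m - k))) ^ r)
      ≤ ∑' m : ℕ, ∑ k ∈ Finset.Icc ((m + 1) / 2) m, H m k := ENNReal.tsum_le_tsum step1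
    _ ≤ ∑' m : ℕ, ∑' k : ℕ, H m k :=
        ENNReal.tsum_le_tsum fun m => ENNReal.sum_le_tsum _
    _ = ∑' k : ℕ, ∑' m : ℕ, H m k := ENNReal.tsum_comm
    _ = ∑' k : ℕ, (∑' j : ℕ, A j) * B k := by
        refine tsum_congr fun k => ?_
        rw [hH]
        rw [ENNReal.tsum_mul_right]
        congr 1
        have hinj : Function.Injective (fun j : ℕ => k + j) :=
          fun a b h => by simp only [] at h; omega
        have hsupp : Function.support (fun m : ℕ => if k ≤ m then A (m - k) else 0)
            ⊆ Set.range (fun j : ℕ => k + j) := by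
          intro m hm
          by_cases hkm : k ≤ m
          · exact ⟨m - k, by simp only []; omega⟩
          · simp [hkm] at hm
        have := hinj.tsum_eq (f := fun m : ℕ => if k ≤ m then A (m - k) else 0) hsupp
        rw [← this]
        refine tsum_congr fun j => ?_
        simp [Nat.le_add_right]
    _ = ENNReal.ofReal (∑' j, c j) * ∑' k, B k := by
        rw [ENNReal.tsum_mul_left]
        congr 1
        rw [ENNReal.ofReal_tsum_of_nonneg (fun j => (hcpos j).le) hsum]
end

section
/- Modified discrete Hardy inequality, case r ≤ 1: For 0 < r ≤ 1, t > 1, κ > 1, λ > 0, and any sequence of positive reals (x_m), ∑_{m=0}^∞ t^m (∑_{k=⌈m/2⌉}^m x_k e^{−λκ^{m−k}})^r ≤ (∑_{j=0}^∞ t^j e^{−λ r κ^j}) · ∑_{k=0}^∞ t^k x_k^r, where the series ∑_{j=0}^∞ t^j e^{−λ r κ^j} converges since κ > 1. -/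
open ENNReal

lemma rpow_add_le_aux {r : ℝ} (hr0 : 0 < r) (hr1 : r ≤ 1) {a b : ℝ} (ha : 0 ≤ a) (hb : 0 ≤ b) :
    (a + b) ^ r ≤ a ^ r + b ^ r := by
  have h := NNReal.rpow_add_le_add_rpow (⟨a, ha⟩ : NNReal) ⟨b, hb⟩ hr0.le hr1
  have h' := NNReal.coe_le_coe.2 h
  push_cast [NNReal.coe_rpow] at h'
  exact h'

lemma rpow_sum_le_sum_rpow_aux {r : ℝ} (hr0 : 0 < r) (hr1 : r ≤ 1) {ι : Type*} (s : Finset ι)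
    (f : ι → ℝ) (hf : ∀ i ∈ s, 0 ≤ f i) :
    (∑ i ∈ s, f i) ^ r ≤ ∑ i ∈ s, f i ^ r := by
  induction s using Finset.cons_induction with
  | empty => simp [Real.zero_rpow hr0.ne']
  | cons a s has ih =>
    rw [Finset.sum_cons, Finset.sum_cons]
    have h1 : 0 ≤ f a := hf a (Finset.mem_cons_self a s)
    have h2 : ∀ i ∈ s, 0 ≤ f i := fun i hi => hf i (Finset.mem_cons_of_mem hi)
    calc (f a + ∑ i ∈ s, f i) ^ r ≤ f a ^ r + (∑ i ∈ s, f i) ^ r :=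
          rpow_add_le_aux hr0 hr1 h1 (Finset.sum_nonneg h2)
      _ ≤ f a ^ r + ∑ i ∈ s, f i ^ r := add_le_add le_rfl (ih h2)

/-- Modified discrete Hardy inequality, case `r ≤ 1`, with explicit constant. -/
theorem modified_discrete_hardy_r_le_one (r t κ lam : ℝ) (hr0 : 0 < r) (hr1 : r ≤ 1)
    (ht : 1 < t) (hκ : 1 < κ) (hlam : 0 < lam) :
    Summable (fun j : ℕ => t ^ j * Real.exp (-(lam * r) * κ ^ j)) ∧
    ∀ x : ℕ → ℝ, (∀ m, 0 < x m) →
      ∑' m : ℕ, ENNReal.ofReal (t ^ m *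
          (∑ k ∈ Finset.Icc ((m + 1) / 2) m, x k * Real.exp (-lam * κ ^ (m - k))) ^ r) ≤
        (∑' j : ℕ, ENNReal.ofReal (t ^ j * Real.exp (-(lam * r) * κ ^ j))) *
          ∑' k : ℕ, ENNReal.ofReal (t ^ k * x k ^ r) := by
  have ht0 : (0:ℝ) < t := lt_trans one_pos ht
  have hc : 0 < lam * r := mul_pos hlam hr0
  -- Part 1: summability
  have hsum : Summable (fun j : ℕ => t ^ j * Real.exp (-(lam * r) * κ ^ j)) := by
    apply summable_of_ratio_norm_eventually_le (r := 1/2) (by norm_num)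
    have htendκ : Filter.Tendsto (fun j : ℕ => κ ^ j) Filter.atTop Filter.atTop :=
      tendsto_pow_atTop_atTop_of_one_lt hκ
    have htend1 : Filter.Tendsto (fun j : ℕ => (κ - 1) * κ ^ j) Filter.atTop Filter.atTop :=
      htendκ.const_mul_atTop (by linarith)
    have htend2 : Filter.Tendsto (fun j : ℕ => -(lam * r) * ((κ - 1) * κ ^ j))
        Filter.atTop Filter.atBot :=
      htend1.const_mul_atTop_of_neg (by linarith)
    have htend3 : Filter.Tendsto
        (fun j : ℕ => t * Real.exp (-(lam * r) * ((κ - 1) * κ ^ j)))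
        Filter.atTop (nhds (t * 0)) :=
      (Real.tendsto_exp_atBot.comp htend2).const_mul t
    rw [mul_zero] at htend3
    have hev := htend3.eventually (gt_mem_nhds (by norm_num : (0:ℝ) < 1/2))
    filter_upwards [hev] with j hj
    have hpos : (0:ℝ) < t ^ j * Real.exp (-(lam * r) * κ ^ j) := by positivity
    have hpos' : (0:ℝ) < t ^ (j+1) * Real.exp (-(lam * r) * κ ^ (j+1)) := by positivity
    rw [Real.norm_eq_abs, Real.norm_eq_abs, abs_of_pos hpos, abs_of_pos hpos']
    have key : t ^ (j+1) * Real.exp (-(lam * r) * κ ^ (j+1)) =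
        (t * Real.exp (-(lam * r) * ((κ - 1) * κ ^ j))) *
          (t ^ j * Real.exp (-(lam * r) * κ ^ j)) := by
      rw [pow_succ, show -(lam * r) * κ ^ (j+1) = -(lam * r) * ((κ - 1) * κ ^ j) + -(lam * r) * κ ^ j by ring, Real.exp_add]
      ring_nf
    rw [key]
    exact mul_le_mul_of_nonneg_right hj.le hpos.le
  refine ⟨hsum, fun x hx => ?_⟩
  set F : ℕ → ℝ≥0∞ := fun j => ENNReal.ofReal (t ^ j * Real.exp (-(lam * r) * κ ^ j)) with hF
  set G : ℕ → ℝ≥0∞ := fun k => ENNReal.ofReal (t ^ k * x k ^ r) with hG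
  -- Step A: pointwise bound
  have stepA : ∀ m : ℕ, ENNReal.ofReal (t ^ m *
      (∑ k ∈ Finset.Icc ((m + 1) / 2) m, x k * Real.exp (-lam * κ ^ (m - k))) ^ r)
      ≤ ∑ k ∈ Finset.range (m+1), F (m - k) * G k := by
    intro m
    have hreal : t ^ m *
        (∑ k ∈ Finset.Icc ((m + 1) / 2) m, x k * Real.exp (-lam * κ ^ (m - k))) ^ r
        ≤ ∑ k ∈ Finset.range (m+1),
            (t ^ (m-k) * Real.exp (-(lam*r) * κ ^ (m-k))) * (t ^ k * x k ^ r) := by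
      have h1 : (∑ k ∈ Finset.Icc ((m + 1) / 2) m, x k * Real.exp (-lam * κ ^ (m - k))) ^ r
          ≤ ∑ k ∈ Finset.Icc ((m + 1) / 2) m, x k ^ r * Real.exp (-(lam*r) * κ ^ (m-k)) := by
        refine (rpow_sum_le_sum_rpow_aux hr0 hr1 _ _ (fun i _ => mul_nonneg (hx i).le (Real.exp_pos _).le)).trans_eq ?_
        refine Finset.sum_congr rfl fun k _ => ?_
        rw [Real.mul_rpow (hx k).le (Real.exp_pos _).le, ← Real.exp_mul]
        congr 1
        ring
      calc t ^ m * (∑ k ∈ Finset.Icc ((m + 1) / 2) m,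
              x k * Real.exp (-lam * κ ^ (m - k))) ^ r
          ≤ t ^ m * ∑ k ∈ Finset.Icc ((m + 1) / 2) m,
              x k ^ r * Real.exp (-(lam*r) * κ ^ (m-k)) :=
            mul_le_mul_of_nonneg_left h1 (by positivity)
        _ = ∑ k ∈ Finset.Icc ((m + 1) / 2) m,
              (t ^ (m-k) * Real.exp (-(lam*r) * κ ^ (m-k))) * (t ^ k * x k ^ r) := by
            rw [Finset.mul_sum]
            refine Finset.sum_congr rfl fun k hk => ?_
            have hkm : k ≤ m := (Finset.mem_Icc.1 hk).2
            rw [← pow_sub_mul_pow t hkm]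
            ring
        _ ≤ ∑ k ∈ Finset.range (m+1),
              (t ^ (m-k) * Real.exp (-(lam*r) * κ ^ (m-k))) * (t ^ k * x k ^ r) := by
            refine Finset.sum_le_sum_of_subset_of_nonneg ?_ fun k _ _ =>
              mul_nonneg (by positivity) (mul_nonneg (by positivity) (Real.rpow_nonneg (hx k).le _))
            intro k hk
            exact Finset.mem_range.2 (Nat.lt_succ_of_le (Finset.mem_Icc.1 hk).2)
    calc ENNReal.ofReal (t ^ m *
          (∑ k ∈ Finset.Icc ((m + 1) / 2) m, x k * Real.exp (-lam * κ ^ (m - k))) ^ r)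
        ≤ ENNReal.ofReal (∑ k ∈ Finset.range (m+1),
            (t ^ (m-k) * Real.exp (-(lam*r) * κ ^ (m-k))) * (t ^ k * x k ^ r)) :=
          ENNReal.ofReal_le_ofReal hreal
      _ = ∑ k ∈ Finset.range (m+1), F (m - k) * G k := by
          rw [ENNReal.ofReal_sum_of_nonneg fun k _ =>
            mul_nonneg (by positivity) (mul_nonneg (by positivity) (Real.rpow_nonneg (hx k).le _))]
          refine Finset.sum_congr rfl fun k _ => ?_
          rw [ENNReal.ofReal_mul (by positivity)]
  -- Step B: sum up and rearrange
  calc ∑' m : ℕ, ENNReal.ofReal (t ^ m *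
          (∑ k ∈ Finset.Icc ((m + 1) / 2) m, x k * Real.exp (-lam * κ ^ (m - k))) ^ r)
      ≤ ∑' m : ℕ, ∑ k ∈ Finset.range (m+1), F (m - k) * G k := ENNReal.tsum_le_tsum stepA
    _ = ∑' m : ℕ, ∑' k : ℕ, (if k ≤ m then F (m - k) * G k else 0) := by
        refine tsum_congr fun m => ?_
        rw [tsum_eq_sum (s := Finset.range (m+1))
          (fun k hk => if_neg (fun h => hk (Finset.mem_range.2 (Nat.lt_succ_of_le h))))]
        exact Finset.sum_congr rfl fun k hk =>
          (if_pos (Nat.lt_succ_iff.1 (Finset.mem_range.1 hk))).symm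
    _ = ∑' k : ℕ, ∑' m : ℕ, (if k ≤ m then F (m - k) * G k else 0) := ENNReal.tsum_comm
    _ = ∑' k : ℕ, (∑' j : ℕ, F j) * G k := by
        refine tsum_congr fun k => ?_
        have h1 : ∀ m : ℕ, (if k ≤ m then F (m - k) * G k else 0)
            = (if k ≤ m then F (m - k) else 0) * G k := by
          intro m; split <;> simp
        rw [tsum_congr h1, ENNReal.tsum_mul_right]
        congr 1
        have hinj : Function.Injective (fun j : ℕ => j + k) := add_left_injective k
        rw [← hinj.tsum_eq (f := fun m : ℕ => if k ≤ m then F (m - k) else 0)]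
        · exact (tsum_congr fun j => by simp).symm
        · intro m hm
          by_cases h : k ≤ m
          · exact ⟨m - k, by simpa using Nat.sub_add_cancel h⟩
          · simp [h] at hm
    _ = (∑' j : ℕ, F j) * ∑' k : ℕ, G k := ENNReal.tsum_mul_left
end
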